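/- Let p be a prime and Γ a solvable transitive subgroup of S_p that is not commutative. Then Γ has exactly p subgroups of index p. -/

import Mathlib

/-!
Let `A` be the last nontrivial term of the derived series of `G`. It is an abelian normal
subgroup, hence transitive (a transitive group of prime degree is primitive) and regular, so
`|A| = p` and `A` is its own centralizer. As `Aut A` is abelian, `G' ≤ A`. A subgroup `H` of
index `p` has order prime to `p` (since `p² ∤ p!`), so `H ∩ A = 1` and `H` is abelian. An element
outside `A` fixes exactly one point, so `H` fixes a point and is its stabilizer. Since `G` is not
commutative, point stabilizers are nontrivial and therefore pairwise distinct.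
-/

open MulAction Subgroup
open scoped commutatorElement

section GroupTheory

variable {G : Type*} [Group G]

theorem Group.IsSolvable.exists_normal_isMulCommutative_ne_bot [Group.IsSolvable G]
    [Nontrivial G] :
    ∃ A : Subgroup G, A.Normal ∧ IsMulCommutative A ∧ A ≠ ⊥ := by
  classical
  have hsolv : ∃ n, derivedSeries G n = ⊥ := IsSolvable.solvable
  have hm : Nat.find hsolv ≠ 0 := fun h => top_ne_bot (α := Subgroup G) <| by
    simpa [h] using Nat.find_spec hsolv
  refine ⟨_, derivedSeries_normal G (Nat.find hsolv - 1), ?_, Nat.find_min hsolv (by omega)⟩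
  rw [← commutator_self_eq_bot_iff, ← derivedSeries_succ, Nat.sub_add_cancel (by omega)]
  exact Nat.find_spec hsolv

theorem Subgroup.commutator_le_centralizer_of_isCyclic (A : Subgroup G) [A.Normal] [IsCyclic A] :
    _root_.commutator G ≤ centralizer (A : Set G) := by
  let _ : CommGroup (MulAut A) := (IsCyclic.mulAutMulEquiv A).toMonoidHom.commGroupOfInjective
    (IsCyclic.mulAutMulEquiv A).injective
  refine (Abelianization.commutator_subset_ker (MulAut.conjNormal (H := A))).trans
    fun g hg a ha => ?_
  have := congrArg Subtype.val (DFunLike.congr_fun (MonoidHom.mem_ker.mp hg) ⟨a, ha⟩)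
  simp only [MulAut.conjNormal_apply, MulAut.one_apply] at this
  exact (mul_inv_eq_iff_eq_mul.mp this).symm

theorem Subgroup.eq_of_le_of_index_eq [Finite G] {H K : Subgroup G} (hle : H ≤ K)
    (h : H.index = K.index) : H = K := by
  refine le_antisymm hle (relIndex_eq_one.mp ?_)
  have := relIndex_mul_index hle
  rw [h] at this
  exact (Nat.mul_eq_right index_ne_zero_of_finite).mp this

end GroupTheory

namespace MulAction

section Faithful

variable {G X : Type*} [Group G] [MulAction G X] [FaithfulSMul G X]

theorem not_sq_dvd_card_of_prime_card (hX : (Nat.card X).Prime) :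
    ¬ Nat.card X ^ 2 ∣ Nat.card G := by
  have : Finite X := (Nat.card_pos_iff.mp hX.pos).2
  have hG : Nat.card G ∣ (Nat.card X).factorial :=
    Nat.card_perm (α := X) ▸ card_dvd_of_injective (toPermHom G X) toPerm_injective
  intro h
  have := h.trans hG
  rw [sq, ← Nat.mul_factorial_pred hX.ne_zero, Nat.mul_dvd_mul_iff_left hX.pos,
    hX.dvd_factorial] at this
  have := hX.pos
  omega

theorem isPretransitive_of_normal_of_prime_card [IsPretransitive G X] (hX : (Nat.card X).Prime)
    {N : Subgroup G} [N.Normal] (hN : N ≠ ⊥) : IsPretransitive N X := by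
  have := IsPreprimitive.of_prime_card (G := G) hX
  refine IsQuasiPreprimitive.isPretransitive_of_normal fun h => hN <| (eq_bot_iff_forall N).mpr ?_
  exact fun g hg => eq_of_smul_eq_smul fun x => by
    rw [one_smul]; exact (Set.eq_univ_iff_forall.mp h x) ⟨g, hg⟩

theorem eq_one_of_mem_centralizer_of_smul_eq_self (A : Subgroup G) [IsPretransitive A X] {g : G}
    (hg : g ∈ centralizer (A : Set G)) {x : X} (hx : g • x = x) : g = 1 := by
  refine eq_of_smul_eq_smul (α := X) fun y => ?_
  obtain ⟨a, rfl⟩ := exists_smul_eq A x y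
  rw [one_smul, Subgroup.smul_def, ← mul_smul, ← hg a a.2, mul_smul, hx]

variable (A : Subgroup G) [IsMulCommutative A] [IsPretransitive A X]

theorem isCancelSMul_of_isMulCommutative : IsCancelSMul A X :=
  isCancelSMul_iff_eq_one_of_smul_eq.mpr fun a _ ha => Subtype.ext <|
    eq_one_of_mem_centralizer_of_smul_eq_self A (le_centralizer A a.2) ha

theorem card_eq_of_isMulCommutative [Nonempty X] : Nat.card A = Nat.card X := by
  obtain ⟨x⟩ := ‹Nonempty X›
  have := isCancelSMul_of_isMulCommutative (X := X) A
  rw [← index_bot, ← IsCancelSMul.stabilizer_eq_bot x, index_stabilizer_of_transitive]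

theorem centralizer_le_of_isMulCommutative [Nonempty X] : centralizer (A : Set G) ≤ A := by
  obtain ⟨x⟩ := ‹Nonempty X›
  intro g hg
  obtain ⟨a, ha⟩ := exists_smul_eq A x (g • x)
  have : (a : G)⁻¹ * g = 1 :=
    eq_one_of_mem_centralizer_of_smul_eq_self A (x := x)
      (mul_mem (inv_mem (le_centralizer A a.2)) hg)
      (by rw [mul_smul, ← ha, Subgroup.smul_def, inv_smul_smul])
  exact inv_mul_eq_one.mp this ▸ a.2

end Faithful

section PrimeDegree

variable {G X : Type*} [Group G] [MulAction G X] [FaithfulSMul G X] (hX : (Nat.card X).Prime)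
  (A : Subgroup G) [IsMulCommutative A] [IsPretransitive A X]
include hX A

theorem disjoint_of_not_dvd_card {H : Subgroup G} (hH : ¬ Nat.card X ∣ Nat.card H) :
    Disjoint H A := by
  have : Nonempty X := (Nat.card_pos_iff.mp hX.pos).1
  refine disjoint_of_coprime_natCard ?_
  rw [card_eq_of_isMulCommutative (X := X) A]
  exact ((Nat.Prime.coprime_iff_not_dvd hX).mpr hH).symm

theorem card_ne_of_not_isMulCommutative (hG : ¬ IsMulCommutative G) :
    Nat.card G ≠ Nat.card X := by
  have : Nonempty X := (Nat.card_pos_iff.mp hX.pos).1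
  intro h
  have hA := card_eq_of_isMulCommutative (X := X) A
  have : Finite A := Nat.finite_of_card_ne_zero (hA ▸ hX.ne_zero)
  have htop : A = ⊤ := eq_top_of_card_eq A (hA.trans h.symm)
  exact hG (isMulCommutative_iff.mpr fun a b =>
    setLike_mul_comm (s := A) (htop ▸ mem_top a) (htop ▸ mem_top b))

variable [A.Normal]

/-- If `g` fixes `x` and `a • x` with `a ∈ A`, then `g a g⁻¹` and `a` agree at `x`, so `g`
commutes with `a`; unless `a = 1`, `a` generates `A`, which is its own centralizer. -/
theorem eq_of_smul_eq_self_of_notMem {g : G} (hg : g ∉ A) {x y : X} (hx : g • x = x)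
    (hy : g • y = y) : x = y := by
  have : Nonempty X := ⟨x⟩
  have : Fact (Nat.card A).Prime := ⟨card_eq_of_isMulCommutative (X := X) A ▸ hX⟩
  have := isCancelSMul_of_isMulCommutative (X := X) A
  obtain ⟨a, rfl⟩ := exists_smul_eq A x y
  by_contra hxa
  have ha : a ≠ 1 := by rintro rfl; exact hxa (one_smul _ _).symm
  have hconj : (⟨g * a * g⁻¹, Normal.conj_mem ‹_› _ a.2 g⟩ : A) = a :=
    IsCancelSMul.right_cancel _ _ x <| by
      simpa only [Subgroup.smul_def, mul_smul, inv_smul_eq_iff.mpr hx.symm] using hy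
  refine hg (centralizer_le_of_isMulCommutative (X := X) A fun b hb => ?_)
  obtain ⟨k, hk⟩ := mem_zpowers_of_prime_card rfl ha (g' := ⟨b, hb⟩)
  have hga : Commute g a := mul_inv_eq_iff_eq_mul.mp (congrArg Subtype.val hconj)
  have hb : (a : G) ^ k = b := congrArg Subtype.val hk
  exact hb ▸ (hga.zpow_right k).eq.symm

/-- Choosing for each `x` the `a ∈ A` with `a g • x = x` gives a map `X → A` which is injective
by `eq_of_smul_eq_self_of_notMem`, hence bijective, so `a = 1` occurs. -/
theorem exists_smul_eq_self_of_notMem {g : G} (hg : g ∉ A) : ∃ x : X, g • x = x := by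
  have : Nonempty X := (Nat.card_pos_iff.mp hX.pos).1
  have hA := card_eq_of_isMulCommutative (X := X) A
  have : Finite A := Nat.finite_of_card_ne_zero (hA ▸ hX.ne_zero)
  choose f hf using fun x : X => exists_smul_eq A (g • x) x
  have hfg (x : X) : (f x : G) * g ∉ A := fun h => hg <| by
    simpa using A.mul_mem (A.inv_mem (f x).2) h
  have hinj : Function.Injective f := fun x y hxy =>
    eq_of_smul_eq_self_of_notMem hX A (hfg x) (by rw [mul_smul]; exact hf x)
      (by rw [hxy, mul_smul]; exact hf y)
  obtain ⟨x, hx⟩ := (hinj.bijective_of_nat_card_le hA.le).2 1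
  exact ⟨x, by simpa [hx] using hf x⟩

theorem isMulCommutative_of_not_dvd_card {H : Subgroup G} (hH : ¬ Nat.card X ∣ Nat.card H) :
    IsMulCommutative H := by
  have : Nonempty X := (Nat.card_pos_iff.mp hX.pos).1
  have : Fact (Nat.card X).Prime := ⟨hX⟩
  have := isCyclic_of_prime_card (card_eq_of_isMulCommutative (X := X) A)
  have hcomm : _root_.commutator G ≤ A := (commutator_le_centralizer_of_isCyclic A).trans
    (centralizer_le_of_isMulCommutative (X := X) A)
  refine isMulCommutative_iff_of_setLike.mpr fun a ha b hb => ?_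
  have hA : ⁅a, b⁆ ∈ A := hcomm (commutator_mem_commutator (mem_top a) (mem_top b))
  have hmem : ⁅a, b⁆ ∈ H := by
    rw [commutatorElement_def]
    exact H.mul_mem (H.mul_mem (H.mul_mem ha hb) (H.inv_mem ha)) (H.inv_mem hb)
  exact commutatorElement_eq_one_iff_mul_comm.mp
    (disjoint_def.mp (disjoint_of_not_dvd_card hX A hH) hmem hA)

theorem exists_le_stabilizer_of_not_dvd_card {H : Subgroup G} (hH : ¬ Nat.card X ∣ Nat.card H)
    (hne : H ≠ ⊥) : ∃ x : X, H ≤ stabilizer G x := by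
  obtain ⟨h, h1⟩ := H.ne_bot_iff_exists_ne_one.mp hne
  have hhA : (h : G) ∉ A := fun h' => h1 <| Subtype.ext <|
    (Subgroup.disjoint_def.mp (disjoint_of_not_dvd_card hX A hH)) h.2 h'
  obtain ⟨x, hx⟩ := exists_smul_eq_self_of_notMem hX A hhA
  have := isMulCommutative_of_not_dvd_card hX A hH
  refine ⟨x, fun k hk => ?_⟩
  refine (eq_of_smul_eq_self_of_notMem hX A hhA hx ?_).symm
  rw [← mul_smul, setLike_mul_comm h.2 hk, mul_smul, hx]

variable [IsPretransitive G X]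

theorem stabilizer_injective (hG : ¬ IsMulCommutative G) :
    Function.Injective (stabilizer G : X → Subgroup G) := by
  intro x y hxy
  have := isCancelSMul_of_isMulCommutative (X := X) A
  obtain ⟨g, hg, hg1⟩ := (stabilizer G x).bot_or_exists_ne_one.resolve_left fun h =>
    card_ne_of_not_isMulCommutative hX A hG <| by
      rw [← index_bot, ← h, index_stabilizer_of_transitive]
  have hgA : g ∉ A := fun h =>
    hg1 (congrArg Subtype.val (IsCancelSMul.eq_one_of_smul (g := (⟨g, h⟩ : A)) hg))
  have hgy : g ∈ stabilizer G y := hxy ▸ hg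
  exact eq_of_smul_eq_self_of_notMem hX A hgA hg hgy

theorem card_subgroups_index_eq_card (hG : ¬ IsMulCommutative G) :
    Nat.card {H : Subgroup G // H.index = Nat.card X} = Nat.card X := by
  have : Finite G := Nat.finite_of_card_ne_zero fun h =>
    not_sq_dvd_card_of_prime_card (G := G) hX (h ▸ dvd_zero _)
  let f (x : X) : {H : Subgroup G // H.index = Nat.card X} :=
    ⟨stabilizer G x, index_stabilizer_of_transitive G x⟩
  refine (Nat.card_eq_of_bijective f ⟨fun x y h =>
    stabilizer_injective hX A hG (congrArg Subtype.val h), ?_⟩).symm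
  rintro ⟨H, hH⟩
  have hdvd : ¬ Nat.card X ∣ Nat.card H := fun h =>
    not_sq_dvd_card_of_prime_card (G := G) hX <| by
      rw [← H.index_mul_card, hH, sq]
      exact mul_dvd_mul_left _ h
  have hne : H ≠ ⊥ := fun h => card_ne_of_not_isMulCommutative hX A hG <| by
    rw [← index_bot, ← h, hH]
  obtain ⟨x, hx⟩ := exists_le_stabilizer_of_not_dvd_card hX A hdvd hne
  exact ⟨x, Subtype.ext
    (eq_of_le_of_index_eq hx (by rw [hH, index_stabilizer_of_transitive])).symm⟩

end PrimeDegree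

end MulAction

/-- a solvable transitive subgroup of `S_p` that is not commutative
has exactly `p` subgroups of index `p`. -/
theorem stmt_5 (p : ℕ) (hp : p.Prime) (Γ : Subgroup (Equiv.Perm (Fin p)))
    (htrans : ∀ a b : Fin p, ∃ σ ∈ Γ, σ a = b)
    (hsolv : IsSolvable ↥Γ)
    (hnc : ¬ ∀ a b : ↥Γ, a * b = b * a) :
    Nat.card {H : Subgroup ↥Γ // H.index = p} = p := by
  have hX : (Nat.card (Fin p)).Prime := by simpa using hp
  have : IsPretransitive Γ (Fin p) := ⟨fun a b => by
    obtain ⟨σ, hσ, h⟩ := htrans a b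
    exact ⟨⟨σ, hσ⟩, h⟩⟩
  have hG : ¬ IsMulCommutative Γ := by rwa [isMulCommutative_iff]
  have : Nontrivial Γ :=
    not_subsingleton_iff_nontrivial.mp fun _ => hnc fun a b => Subsingleton.elim _ _
  obtain ⟨A, _, _, hA⟩ := hsolv.exists_normal_isMulCommutative_ne_bot
  have := isPretransitive_of_normal_of_prime_card hX hA
  simpa using card_subgroups_index_eq_card hX A hG
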